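/- arXiv:1303.7361 — 6 statements merged into one kernel-verified Lean document; each statement's English description precedes it below -/
import Mathlib

section
/- Let n ≥ 1 and let R : (Fin n → Fin 2) → ℂ be a tensor of arity n on domain size 2. Then R is degenerate if and only if for every position t ∈ Fin n the t-th signature matrix A_R(t) has rank at most 1. -/
open Matrix BigOperators

/-- A tensor of arity `n` on domain size `k` is degenerate if it is a tensor
product of vectors. -/
def Degenerate {n k : ℕ} (R : (Fin n → Fin k) → ℂ) : Prop :=
  ∃ v : Fin n → (Fin k → ℂ), ∀ i, R i = ∏ t, v t (i t)

/-- The recognizer transform `R̲ M^{⊗n}` of a tensor `R̲` on domain `D`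
under a matrix `M` with rows indexed by `D` and columns indexed by `E`. -/
noncomputable def rtrans {n : ℕ} {D E : Type*} [Fintype D] (M : Matrix D E ℂ)
    (R : (Fin n → D) → ℂ) : (Fin n → E) → ℂ :=
  fun i => ∑ j : Fin n → D, R j * ∏ t, M (j t) (i t)

/-- The generator transform `M^{⊗n} G` of a column tensor `G` on domain `E`
under a matrix `M` with rows indexed by `D` and columns indexed by `E`. -/
noncomputable def gtrans {n : ℕ} {D E : Type*} [Fintype E] (M : Matrix D E ℂ)
    (G : (Fin n → E) → ℂ) : (Fin n → D) → ℂ :=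
  fun s => ∑ i : Fin n → E, (∏ t, M (s t) (i t)) * G i

/-- The restriction `R^{(σ,τ)}` of a tensor on domain size `k` to `{σ, τ}`. -/
def restrict {n k : ℕ} (R : (Fin n → Fin k) → ℂ) (σ τ : Fin k) :
    (Fin n → Fin 2) → ℂ :=
  fun j => R fun t => if j t = 0 then σ else τ

/-- The submatrix `(α_σ α_τ)` formed by the columns `σ` and `τ` of `M`. -/
def subM {D : Type*} {k : ℕ} (M : Matrix D (Fin k) ℂ) (σ τ : Fin k) :
    Matrix D (Fin 2) ℂ :=
  Matrix.of fun i c => if c = 0 then M i σ else M i τ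

/-- The `t`-th signature matrix `A_R(t)` of a tensor on domain size 2. -/
def sigMatrix {n : ℕ} (R : (Fin n → Fin 2) → ℂ) (t : Fin n) :
    Matrix (Fin 2) ({s : Fin n // s ≠ t} → Fin 2) ℂ :=
  Matrix.of fun b i => R fun s => if h : s = t then b else i ⟨s, h⟩

/-- The two-column matrix `A_{σ,τ}(R)`, with rows indexed by a position `t`
and an assignment of domain values to the remaining positions. -/
def Amat {n k : ℕ} (R : (Fin n → Fin k) → ℂ) (σ τ : Fin k) :
    Matrix (Σ t : Fin n, ({s : Fin n // s ≠ t} → Fin k)) (Fin 2) ℂ :=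
  Matrix.of fun p c =>
    R fun s => if h : s = p.1 then (if c = 0 then σ else τ) else p.2 ⟨s, h⟩

/-- The column vector `b_w(R)`. -/
def bvec {n k : ℕ} (R : (Fin n → Fin k) → ℂ) (w : Fin k) :
    (Σ t : Fin n, ({s : Fin n // s ≠ t} → Fin k)) → ℂ :=
  fun p => R fun s => if h : s = p.1 then w else p.2 ⟨s, h⟩

/-- The `2 × k` matrix `[[1,0,0,…,0],[0,1,0,…,0]]`. -/
def projMat (k : ℕ) : Matrix (Fin 2) (Fin k) ℂ :=
  Matrix.of fun r c => if (r : ℕ) = (c : ℕ) then 1 else 0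

/-!
A rank-one signature matrix `A_R(t)` has vanishing `2 × 2` minors, which says that exchanging the
`t`-th entries of two inputs `x`, `y` preserves `R x * R y`. Fix `z` with `R z ≠ 0` and move the
coordinates of `x` into `z` one at a time: this gives `R x * R z ^ n = R z * ∏ₜ R (z[t ↦ x t])`,
i.e. `R` is a product of the vectors `b ↦ R (z[t ↦ b]) / R z`, up to the scalar `R z`.
-/

theorem Matrix.mul_eq_mul_of_rank_le_one {m n K : Type*} [Fintype n] [Field K]
    (A : Matrix m n K) (hA : A.rank ≤ 1) (i i' : m) (j j' : n) :
    A i j * A i' j' = A i j' * A i' j := by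
  by_contra hne
  have hdet : (A.submatrix ![i, i'] ![j, j']).det ≠ 0 := by
    rwa [det_fin_two, sub_ne_zero]
  have hrank : (A.submatrix ![i, i'] ![j, j']).rank = 2 := by
    simpa using rank_of_isUnit _ ((isUnit_iff_isUnit_det _).2 hdet.isUnit)
  have := A.rank_submatrix_le ![i, i'] ![j, j']
  omega

section Exchange

variable {ι α M : Type*} [Fintype ι] [DecidableEq ι] [CommMonoid M]

theorem mul_pow_card_eq_of_exchange (R : (ι → α) → M)
    (hR : ∀ t x y, R x * R y = R (Function.update x t (y t)) * R (Function.update y t (x t)))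
    (z x : ι → α) :
    R x * R z ^ Fintype.card ι = R z * ∏ t, R (Function.update z t (x t)) := by
  suffices H : ∀ S : Finset ι, R x * R z ^ S.card =
      R (S.piecewise z x) * ∏ t ∈ S, R (Function.update z t (x t)) by
    simpa using H Finset.univ
  intro S
  induction S using Finset.induction_on with
  | empty => simp
  | @insert a S ha ih =>
    have hstep : R (S.piecewise z x) * R z =
        R ((insert a S).piecewise z x) * R (Function.update z a (x a)) := by
      rw [hR a, Finset.piecewise_insert, S.piecewise_eq_of_notMem _ _ ha]
    calc R x * R z ^ (insert a S).card
        = R (S.piecewise z x) * R z * ∏ t ∈ S, R (Function.update z t (x t)) := by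
          rw [Finset.card_insert_of_notMem ha, pow_succ, ← mul_assoc, ih]; ac_rfl
      _ = _ := by rw [hstep, Finset.prod_insert ha]; ac_rfl

end Exchange

theorem degenerate_of_exchange {n k : ℕ} (hn : 0 < n) (R : (Fin n → Fin k) → ℂ)
    (hR : ∀ t x y, R x * R y = R (Function.update x t (y t)) * R (Function.update y t (x t))) :
    Degenerate R := by
  let t₀ : Fin n := ⟨0, hn⟩
  by_cases hzero : ∀ z, R z = 0
  · exact ⟨fun _ _ => 0, fun x => by simp [hzero, Finset.prod_eq_zero (Finset.mem_univ t₀)]⟩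
  push Not at hzero
  obtain ⟨z, hz⟩ := hzero
  refine ⟨fun t b => (if t = t₀ then R z else 1) * (R (Function.update z t b) / R z), fun x => ?_⟩
  have hkey := mul_pow_card_eq_of_exchange R hR z x
  rw [Fintype.card_fin] at hkey
  rw [Finset.prod_mul_distrib, Finset.prod_ite_eq' Finset.univ t₀, Finset.prod_div_distrib,
    Finset.prod_const, Finset.card_univ, Fintype.card_fin, if_pos (Finset.mem_univ _),
    ← mul_div_assoc, eq_div_iff (pow_ne_zero _ hz), hkey]

theorem sigMatrix_apply_eq_apply_update {n : ℕ} (R : (Fin n → Fin 2) → ℂ) (t : Fin n)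
    (b : Fin 2) (x : Fin n → Fin 2) :
    sigMatrix R t b (fun s => x s) = R (Function.update x t b) := by
  simp only [sigMatrix, of_apply]
  congr 1
  funext s
  by_cases h : s = t <;> simp [h]

theorem exchange_of_rank_sigMatrix_le_one {n : ℕ} (R : (Fin n → Fin 2) → ℂ) (t : Fin n)
    (ht : (sigMatrix R t).rank ≤ 1) (x y : Fin n → Fin 2) :
    R x * R y = R (Function.update x t (y t)) * R (Function.update y t (x t)) := by
  have := (sigMatrix R t).mul_eq_mul_of_rank_le_one ht (x t) (y t) (fun s => x s) (fun s => y s)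
  simpa only [sigMatrix_apply_eq_apply_update, Function.update_eq_self,
    mul_comm (R (Function.update y t _))] using this

theorem sigMatrix_eq_vecMulVec_of_eq_prod {n : ℕ} {R : (Fin n → Fin 2) → ℂ}
    {v : Fin n → Fin 2 → ℂ} (hv : ∀ i, R i = ∏ t, v t (i t)) (t : Fin n) :
    sigMatrix R t = vecMulVec (v t) (fun c => ∏ s : {s // s ≠ t}, v s (c s)) := by
  ext b c
  rw [sigMatrix, of_apply, hv, Fintype.prod_eq_mul_prod_subtype_ne _ t, vecMulVec_apply]
  congr 1
  · simp
  · exact Finset.prod_congr rfl fun s _ => by rw [dif_neg s.2]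

theorem Degenerate.rank_sigMatrix_le_one {n : ℕ} {R : (Fin n → Fin 2) → ℂ} (hR : Degenerate R)
    (t : Fin n) : (sigMatrix R t).rank ≤ 1 := by
  obtain ⟨v, hv⟩ := hR
  rw [sigMatrix_eq_vecMulVec_of_eq_prod hv t]
  exact rank_vecMulVec_le _ _

/-- A tensor of arity `n ≥ 1` on domain size 2 is degenerate
iff all of its signature matrices have rank at most 1. -/
theorem degenerate_iff_sigMatrix_rank_le_one {n : ℕ} (hn : 1 ≤ n)
    (R : (Fin n → Fin 2) → ℂ) :
    Degenerate R ↔ ∀ t : Fin n, (sigMatrix R t).rank ≤ 1 :=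
  ⟨Degenerate.rank_sigMatrix_le_one, fun h =>
    degenerate_of_exchange hn R fun t => exchange_of_rank_sigMatrix_le_one R t (h t)⟩
end

section
/- Let k ≥ 3, ℓ ≥ 1, n ≥ 1, and let M be a 2^ℓ × k complex matrix of rank 2 whose columns α_σ and α_τ (for some σ ≠ τ in Fin k) are linearly independent. Suppose R is a tensor of arity n on domain size k such that R = R̲ M^{⊗n} for some tensor R̲ of arity n on domain size 2^ℓ, and R is non-degenerate. Then the matrix A_{σ,τ}(R) has rank 2. -/
open Matrix BigOperators

/-!
Since `M` has rank 2 and its columns `α_σ, α_τ` are independent, every column of `M` is a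
combination of these two, i.e. `M = (α_σ α_τ) N`, and hence `R = R^{(σ,τ)} N^{⊗n}`.
A nonzero kernel vector `(a, b)` of `A_{σ,τ}(R)` says `a R(…σ…) + b R(…τ…) = 0` in every
position and every context; on contexts with values in `{σ, τ}` this makes every one-position
fibre of `R^{(σ,τ)}` proportional to `(b, -a)`, so `R^{(σ,τ)}` is a product tensor, and then so
is its transform `R`. Hence the two columns of `A_{σ,τ}(R)` are independent.
-/

theorem Matrix.exists_eq_mul_of_rank_eq_card {K m n p : Type*} [Field K] [Fintype n]
    [Fintype p] {M : Matrix m n K} {B : Matrix m p K} (hB : LinearIndependent K B.col)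
    (hBM : ∀ c, B.col c ∈ Submodule.span K (Set.range M.col))
    (hrank : M.rank = Fintype.card p) : ∃ N : Matrix p n K, M = B * N := by
  have hspan : Submodule.span K (Set.range B.col) = LinearMap.range M.mulVecLin :=
    Submodule.eq_of_le_of_finrank_le
      (by rw [range_mulVecLin]; exact Submodule.span_le.2 (Set.range_subset_iff.2 hBM))
      (by rw [finrank_span_eq_card hB, ← hrank]; rfl)
  have hcol : ∀ w, M.col w ∈ LinearMap.range B.mulVecLin := fun w => by
    rw [range_mulVecLin, hspan, range_mulVecLin]
    exact Submodule.subset_span ⟨w, rfl⟩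
  choose N hN using fun w => LinearMap.mem_range.1 (hcol w)
  refine ⟨(of N)ᵀ, ?_⟩
  ext j w
  exact (congrFun (hN w) j).symm

theorem rtrans_mul {n : ℕ} {D E F : Type*} [Fintype D] [Fintype E] (A : Matrix D E ℂ)
    (B : Matrix E F ℂ) (R : (Fin n → D) → ℂ) :
    rtrans (A * B) R = rtrans B (rtrans A R) := by
  funext i
  simp only [rtrans, mul_apply, Fintype.prod_sum, Finset.mul_sum, Finset.sum_mul]
  rw [Finset.sum_comm]
  refine Finset.sum_congr rfl fun x _ => Finset.sum_congr rfl fun j _ => ?_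
  rw [Finset.prod_mul_distrib, mul_assoc]

theorem restrict_rtrans {n k : ℕ} {D : Type*} [Fintype D] (M : Matrix D (Fin k) ℂ)
    (R : (Fin n → D) → ℂ) (σ τ : Fin k) :
    restrict (rtrans M R) σ τ = rtrans (subM M σ τ) R := by
  funext x
  simp only [restrict, rtrans, subM, of_apply, apply_ite]

theorem Degenerate.rtrans {n m k : ℕ} {T : (Fin n → Fin m) → ℂ} (hT : Degenerate T)
    (N : Matrix (Fin m) (Fin k) ℂ) : Degenerate (rtrans N T) := by
  obtain ⟨v, hv⟩ := hT
  refine ⟨fun t e => ∑ d, v t d * N d e, fun i => ?_⟩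
  simp only [_root_.rtrans, hv, Fintype.prod_sum, Finset.prod_mul_distrib]

theorem mul_pow_card_eq_piecewise {ι D : Type*} [DecidableEq ι] (T : (ι → D) → ℂ)
    (u : D → ℂ)
    (hT : ∀ t x y y', T (Function.update x t y) * u y' = T (Function.update x t y') * u y)
    (c : D) (s : Finset ι) (x : ι → D) :
    T x * u c ^ s.card = T (s.piecewise (fun _ => c) x) * ∏ t ∈ s, u (x t) := by
  induction s using Finset.induction_on with
  | empty => simp
  | insert a s ha ih =>
    set y := s.piecewise (fun _ => c) x
    have hya : y a = x a := Finset.piecewise_eq_of_notMem _ _ _ ha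
    have hstep := hT a y (y a) c
    rw [Function.update_eq_self, hya] at hstep
    rw [Finset.card_insert_of_notMem ha, Finset.prod_insert ha, Finset.piecewise_insert, pow_succ]
    linear_combination u c * ih + (∏ t ∈ s, u (x t)) * hstep

/-- `hT` says that every one-position fibre `y ↦ T (update x t y)` is proportional to `u`. -/
theorem degenerate_of_update_proportional {n k : ℕ} (hn : 0 < n) (T : (Fin n → Fin k) → ℂ)
    (u : Fin k → ℂ) (hu : u ≠ 0)
    (hT : ∀ t x y y', T (Function.update x t y) * u y' = T (Function.update x t y') * u y) :
    Degenerate T := by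
  obtain ⟨c, hc⟩ := Function.ne_iff.1 hu
  have key := fun x => mul_pow_card_eq_piecewise T u hT c Finset.univ x
  simp only [Finset.card_univ, Fintype.card_fin, Finset.piecewise_univ] at key
  refine ⟨fun t d => (Pi.mulSingle ⟨0, hn⟩ (T (fun _ => c) / u c ^ n) : Fin n → ℂ) t * u d,
    fun x => ?_⟩
  rw [Finset.prod_mul_distrib, Finset.prod_pi_mulSingle', if_pos (Finset.mem_univ _),
    div_mul_eq_mul_div, eq_div_iff (pow_ne_zero _ hc), key x]

theorem Amat_apply_eq_restrict_update {n k : ℕ} (R : (Fin n → Fin k) → ℂ) (σ τ : Fin k) (t : Fin n)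
    (x : Fin n → Fin 2) (c : Fin 2) :
    Amat R σ τ ⟨t, fun s => if x s.1 = 0 then σ else τ⟩ c
      = restrict R σ τ (Function.update x t c) := by
  simp only [Amat, restrict, of_apply]
  congr 1
  funext s
  by_cases hs : s = t
  · subst hs; simp
  · simp [hs]

/-- A kernel vector `(a, b)` of `A_{σ,τ}(R)` forces every fibre of `R^{(σ,τ)}` onto the line
spanned by `(b, -a)`. -/
theorem degenerate_restrict_of_mulVec_eq_zero {n k : ℕ} (hn : 0 < n)
    {R : (Fin n → Fin k) → ℂ} {σ τ : Fin k} {v : Fin 2 → ℂ} (hv0 : v ≠ 0)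
    (hv : Amat R σ τ *ᵥ v = 0) : Degenerate (restrict R σ τ) := by
  refine degenerate_of_update_proportional hn _ ![v 1, -v 0] ?_ fun t x y y' => ?_
  · intro h
    apply hv0
    funext c
    fin_cases c
    · simpa using congrFun h 1
    · simpa using congrFun h 0
  · have hrow := congrFun hv ⟨t, fun s => if x s.1 = 0 then σ else τ⟩
    simp only [mulVec, dotProduct, Fin.sum_univ_two, Amat_apply_eq_restrict_update, Pi.zero_apply]
      at hrow
    fin_cases y <;> fin_cases y' <;>
      simp only [Fin.zero_eta, Fin.mk_one, cons_val_zero, cons_val_one, cons_val_fin_one, mul_neg]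
    · linear_combination -hrow
    · linear_combination hrow

theorem Amat_rank_two_general {k ℓ n : ℕ} (hn : 1 ≤ n)
    (M : Matrix (Fin (2 ^ ℓ)) (Fin k) ℂ) (hM : M.rank = 2) (σ τ : Fin k)
    (hind : LinearIndependent ℂ ![(fun i => M i σ), (fun i => M i τ)])
    (R : (Fin n → Fin k) → ℂ) (R0 : (Fin n → Fin (2 ^ ℓ)) → ℂ)
    (hR : R = rtrans M R0) (hnd : ¬ Degenerate R) :
    (Amat R σ τ).rank = 2 := by
  have hsubM : (subM M σ τ).col = ![(fun i => M i σ), (fun i => M i τ)] := by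
    funext c; fin_cases c <;> rfl
  obtain ⟨N, hMN⟩ := exists_eq_mul_of_rank_eq_card (M := M) (B := subM M σ τ) (by rwa [hsubM])
    (fun c => by rw [hsubM]; fin_cases c <;> exact Submodule.subset_span ⟨_, rfl⟩)
    (by rw [hM, Fintype.card_fin])
  have hRT : R = rtrans N (restrict R σ τ) := by
    rw [hR, restrict_rtrans, ← rtrans_mul, ← hMN]
  have hker : ∀ v, Amat R σ τ *ᵥ v = 0 → v = 0 := fun v hv => by
    by_contra hv0
    have hdeg := (degenerate_restrict_of_mulVec_eq_zero hn hv0 hv).rtrans N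
    rw [← hRT] at hdeg
    exact hnd hdeg
  have hcol : LinearIndependent ℂ (Amat R σ τ).col := mulVec_injective_iff.1 fun a b hab =>
    sub_eq_zero.1 (hker _ (by rw [mulVec_sub, hab, sub_self]))
  rw [rank_eq_finrank_span_cols, finrank_span_eq_card hcol, Fintype.card_fin]

/-- If `R` is non-degenerate and realizable on a rank-2 basis
`M` whose columns `σ, τ` are linearly independent, then `A_{σ,τ}(R)` has
rank 2. -/
theorem Amat_rank_two {k ℓ n : ℕ} (hk : 3 ≤ k) (hℓ : 1 ≤ ℓ) (hn : 1 ≤ n)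
    (M : Matrix (Fin (2 ^ ℓ)) (Fin k) ℂ) (hM : M.rank = 2) (σ τ : Fin k)
    (hστ : σ ≠ τ)
    (hind : LinearIndependent ℂ ![(fun i => M i σ), (fun i => M i τ)])
    (R : (Fin n → Fin k) → ℂ) (R0 : (Fin n → Fin (2 ^ ℓ)) → ℂ)
    (hR : R = rtrans M R0) (hnd : ¬ Degenerate R) :
    (Amat R σ τ).rank = 2 :=
  Amat_rank_two_general hn M hM σ τ hind R R0 hR hnd
end

section
/- Let k ≥ 3, ℓ ≥ 1, n ≥ 1, and let M = (α_1 ⋯ α_k) be a 2^ℓ × k complex matrix of rank 2 whose columns α_σ, α_τ (σ ≠ τ) are linearly independent, and let X_{σ,τ} be the unique 2 × k matrix with (α_σ α_τ)·X_{σ,τ} = M, with entries X_{σ,τ} = (x^σ_w; x^τ_w)_{w ∈ Fin k}. Suppose R is a tensor of arity n on domain size k with R = R̲ M^{⊗n} for some tensor R̲ of arity n on domain size 2^ℓ. Then for every w ∈ Fin k, every position t ∈ Fin n, and all values i_1,…,i_{t-1},i_{t+1},…,i_n ∈ Fin k: R(i_1,…,i_{t-1}, w, i_{t+1},…,i_n)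 = x^σ_w · R(i_1,…,i_{t-1}, σ, i_{t+1},…,i_n) + x^τ_w · R(i_1,…,i_{t-1}, τ, i_{t+1},…,i_n). -/
open Matrix BigOperators

/-! Fixing every position of `R̲ M^{⊗n}` except `t`, the entry depends linearly on the column
of `M` chosen at `t`; and `(α_σ α_τ) X_{σ,τ} = M` says that column `w` of `M` is
`x^σ_w α_σ + x^τ_w α_τ`. -/

section

variable {n : ℕ} {D E : Type*} [Fintype D] (M : Matrix D E ℂ) (R₀ : (Fin n → D) → ℂ)

theorem rtrans_update (i : Fin n → E) (t : Fin n) (e : E) :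
    rtrans M R₀ (Function.update i t e) =
      ∑ j : Fin n → D, R₀ j * (M (j t) e * ∏ s ∈ Finset.univ.erase t, M (j s) (i s)) := by
  refine Finset.sum_congr rfl fun j _ => ?_
  rw [← Finset.mul_prod_erase _ _ (Finset.mem_univ t), Function.update_self]
  congr 2
  refine Finset.prod_congr rfl fun s hs => ?_
  rw [Function.update_of_ne (Finset.ne_of_mem_erase hs)]

theorem rtrans_update_eq_of_column_eq (i : Fin n → E) (t : Fin n) {w u v : E} (a b : ℂ)
    (h : ∀ d, M d w = a * M d u + b * M d v) :
    rtrans M R₀ (Function.update i t w) =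
      a * rtrans M R₀ (Function.update i t u) + b * rtrans M R₀ (Function.update i t v) := by
  simp only [rtrans_update, h, Finset.mul_sum, ← Finset.sum_add_distrib]
  exact Finset.sum_congr rfl fun j _ => by ring

end

theorem subM_mul_apply {D F : Type*} {k : ℕ} (M : Matrix D (Fin k) ℂ) (σ τ : Fin k)
    (X : Matrix (Fin 2) F ℂ) (d : D) (f : F) :
    (subM M σ τ * X) d f = M d σ * X 0 f + M d τ * X 1 f := by
  simp [Matrix.mul_apply, Fin.sum_univ_two, subM]

theorem entry_linear_combination_general {k ℓ n : ℕ} (M : Matrix (Fin (2 ^ ℓ)) (Fin k) ℂ)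
    (σ τ : Fin k)
    (X : Matrix (Fin 2) (Fin k) ℂ) (hX : subM M σ τ * X = M)
    (R : (Fin n → Fin k) → ℂ) (R0 : (Fin n → Fin (2 ^ ℓ)) → ℂ)
    (hR : R = rtrans M R0) :
    ∀ (w : Fin k) (t : Fin n) (i : Fin n → Fin k),
      R (Function.update i t w) =
        X 0 w * R (Function.update i t σ) + X 1 w * R (Function.update i t τ) := by
  intro w t i
  subst hR
  exact rtrans_update_eq_of_column_eq M R0 i t (X 0 w) (X 1 w) fun d => by
    rw [← congrFun (congrFun hX d) w, subM_mul_apply]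
    ring

/-- If `R = R̲ M^{⊗n}` and `(α_σ α_τ) · X_{σ,τ} = M`, then the
value of `R` at any index with position `t` set to `w` is the corresponding
linear combination of the values with position `t` set to `σ` resp. `τ`. -/
theorem entry_linear_combination {k ℓ n : ℕ} (hk : 3 ≤ k) (hℓ : 1 ≤ ℓ)
    (hn : 1 ≤ n) (M : Matrix (Fin (2 ^ ℓ)) (Fin k) ℂ) (hM : M.rank = 2)
    (σ τ : Fin k) (hστ : σ ≠ τ)
    (hind : LinearIndependent ℂ ![(fun i => M i σ), (fun i => M i τ)])
    (X : Matrix (Fin 2) (Fin k) ℂ) (hX : subM M σ τ * X = M)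
    (R : (Fin n → Fin k) → ℂ) (R0 : (Fin n → Fin (2 ^ ℓ)) → ℂ)
    (hR : R = rtrans M R0) :
    ∀ (w : Fin k) (t : Fin n) (i : Fin n → Fin k),
      R (Function.update i t w) =
        X 0 w * R (Function.update i t σ) + X 1 w * R (Function.update i t τ) :=
  entry_linear_combination_general M σ τ X hX R R0 hR
end

section
/- Let k ≥ 3, ℓ ≥ 1, n ≥ 1. Let M be a 2^ℓ × k complex matrix whose columns α_σ, α_τ (σ ≠ τ) are linearly independent, let X_{σ,τ} be a 2 × k matrix with (α_σ α_τ)·X_{σ,τ} = M, and let X'_{σ,τ} be an invertible k × k matrix with X_{σ,τ}·X'_{σ,τ} = [[1,0,0,…,0],[0,1,0,…,0]]. Suppose R = R̲ M^{⊗n} for a tensor R̲ of arity n on domain size 2^ℓ, and set R' = R (X'_{σ,τ})^{⊗n}. Then R'(i_1,…,i_n) = 0 whenever some index i_j lies outside the first two domain values {0,1}. -/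
open Matrix BigOperators

lemma rtrans_comp {n : ℕ} {D E F : Type*} [Fintype D] [Fintype E]
    (A : Matrix D E ℂ) (B : Matrix E F ℂ) (R : (Fin n → D) → ℂ) :
    rtrans B (rtrans A R) = rtrans (A * B) R := by
  funext i
  simp only [rtrans, Finset.sum_mul, Matrix.mul_apply]
  rw [Finset.sum_comm]
  refine Finset.sum_congr rfl fun s _ => ?_
  simp only [mul_assoc, ← Finset.prod_mul_distrib, ← Finset.mul_sum]
  rw [Fintype.prod_sum (fun t e => A (s t) e * B e (i t))]

lemma rtrans_apply_eq_zero_of_col_eq_zero {n : ℕ} {D E : Type*} [Fintype D]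
    (M : Matrix D E ℂ) (R : (Fin n → D) → ℂ) {i : Fin n → E} {t : Fin n}
    (hcol : ∀ d, M d (i t) = 0) : rtrans M R i = 0 :=
  Finset.sum_eq_zero fun j _ => by
    rw [Finset.prod_eq_zero (Finset.mem_univ t) (hcol (j t)), mul_zero]

lemma projMat_apply_of_two_le {k : ℕ} (r : Fin 2) {c : Fin k} (hc : 2 ≤ (c : ℕ)) :
    projMat k r c = 0 :=
  if_neg (by omega)

lemma mul_projMat_apply_of_two_le {D : Type*} {k : ℕ} (A : Matrix D (Fin 2) ℂ) (d : D)
    {c : Fin k} (hc : 2 ≤ (c : ℕ)) : (A * projMat k) d c = 0 := by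
  rw [Matrix.mul_apply]
  exact Finset.sum_eq_zero fun r _ => by rw [projMat_apply_of_two_le r hc, mul_zero]

theorem transformed_recognizer_vanishes_general {k ℓ n : ℕ}
    (M : Matrix (Fin (2 ^ ℓ)) (Fin k) ℂ) (σ τ : Fin k)
    (X : Matrix (Fin 2) (Fin k) ℂ) (hX : subM M σ τ * X = M)
    (X' : Matrix (Fin k) (Fin k) ℂ)
    (hXX' : X * X' = projMat k)
    (R : (Fin n → Fin k) → ℂ) (R0 : (Fin n → Fin (2 ^ ℓ)) → ℂ)
    (hR : R = rtrans M R0) (R' : (Fin n → Fin k) → ℂ)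
    (hR' : R' = rtrans X' R) :
    ∀ i : Fin n → Fin k, (∃ j : Fin n, 2 ≤ (i j : ℕ)) → R' i = 0 := by
  rintro i ⟨j, hj⟩
  -- `M X' = (α_σ α_τ) X X' = (α_σ α_τ) [I 0]`, whose columns beyond the first two vanish.
  have hMX' : M * X' = subM M σ τ * projMat k := by
    rw [← hXX', ← Matrix.mul_assoc, hX]
  rw [hR', hR, rtrans_comp, hMX']
  exact rtrans_apply_eq_zero_of_col_eq_zero _ R0 fun d => mul_projMat_apply_of_two_le _ d hj

/-- With `R' = R (X'_{σ,τ})^{⊗n}`, the tensor `R'` vanishes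
at any index having a coordinate outside the first two domain values. -/
theorem transformed_recognizer_vanishes {k ℓ n : ℕ} (hk : 3 ≤ k) (hℓ : 1 ≤ ℓ)
    (hn : 1 ≤ n) (M : Matrix (Fin (2 ^ ℓ)) (Fin k) ℂ) (σ τ : Fin k)
    (hστ : σ ≠ τ)
    (hind : LinearIndependent ℂ ![(fun i => M i σ), (fun i => M i τ)])
    (X : Matrix (Fin 2) (Fin k) ℂ) (hX : subM M σ τ * X = M)
    (X' : Matrix (Fin k) (Fin k) ℂ) (hinv : IsUnit X'.det)
    (hXX' : X * X' = projMat k)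
    (R : (Fin n → Fin k) → ℂ) (R0 : (Fin n → Fin (2 ^ ℓ)) → ℂ)
    (hR : R = rtrans M R0) (R' : (Fin n → Fin k) → ℂ)
    (hR' : R' = rtrans X' R) :
    ∀ i : Fin n → Fin k, (∃ j : Fin n, 2 ≤ (i j : ℕ)) → R' i = 0 :=
  transformed_recognizer_vanishes_general M σ τ X hX X' hXX' R R0 hR R' hR'
end

section
/- Let k ≥ 3, n ≥ 1, let X' be an invertible k × k complex matrix, let R and G be tensors of arity n on domain size k, and set R' = R (X')^{⊗n} and G' = ((X')^{-1})^{⊗n} G. Suppose R'(i_1,…,i_n) = 0 whenever some index i_j lies outside the first two domain values {0,1}, and let Ř and Ǧ be the restrictions of R' and G' to {0,1}, respectively. Then ∑_{j : Fin n → Fin 2} Ǧ(j) · Ř(j) = ∑_{i : Fin n → Fin k} G(i) · R(i); that is, the contraction of Ǧ with Ř equals the contraction of G with R. -/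
open Matrix BigOperators

/-!
Contracting `G' = (X'⁻¹)^{⊗n} G` with `R' = R X'^{⊗n}` lets the factors `X' X'⁻¹ = 1` cancel
position by position, so the contraction of `G'` with `R'` equals that of `G` with `R`. Since `R'`
vanishes as soon as one index leaves `{0, 1}`, only the assignments with values in `{0, 1}`
contribute, and these are exactly the assignments seen by the restrictions `Ǧ` and `Ř`.
-/

section Transforms

variable {n : ℕ} {D E : Type*}

theorem prod_one_apply_eq_ite {α : Type*} [CommSemiring α] [DecidableEq D]
    (j i : Fin n → D) : ∏ t, (1 : Matrix D D α) (j t) (i t) = if j = i then 1 else 0 := by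
  split_ifs with h
  · exact Finset.prod_eq_one fun t _ => by rw [h, Matrix.one_apply_eq]
  · obtain ⟨t, ht⟩ := Function.ne_iff.mp h
    exact Finset.prod_eq_zero (Finset.mem_univ t) (Matrix.one_apply_ne ht)

theorem sum_prod_mul_prod_eq_prod_mul_apply {α : Type*} [CommSemiring α] [Fintype E]
    (M : Matrix D E α) (N : Matrix E D α) (j i : Fin n → D) :
    ∑ s : Fin n → E, (∏ t, M (j t) (s t)) * ∏ t, N (s t) (i t) =
      ∏ t, (M * N) (j t) (i t) := by
  simp only [Matrix.mul_apply, Fintype.prod_sum, Finset.prod_mul_distrib]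

theorem sum_gtrans_mul_rtrans_of_mul_eq_one [Fintype D] [Fintype E] [DecidableEq D]
    {M : Matrix D E ℂ} {N : Matrix E D ℂ} (hMN : M * N = 1) (R G : (Fin n → D) → ℂ) :
    ∑ s, gtrans N G s * rtrans M R s = ∑ i, G i * R i := by
  calc ∑ s, gtrans N G s * rtrans M R s
      = ∑ i, ∑ j, G i * R j *
          ∑ s : Fin n → E, (∏ t, M (j t) (s t)) * ∏ t, N (s t) (i t) := by
        simp only [gtrans, rtrans, Finset.sum_mul_sum]
        rw [Finset.sum_comm]
        refine Finset.sum_congr rfl fun i _ => ?_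
        rw [Finset.sum_comm]
        refine Finset.sum_congr rfl fun j _ => ?_
        rw [Finset.mul_sum]
        refine Finset.sum_congr rfl fun s _ => ?_
        ring
    _ = ∑ i, ∑ j, G i * R j * if j = i then 1 else 0 := by
        simp only [sum_prod_mul_prod_eq_prod_mul_apply, hMN, prod_one_apply_eq_ite]
    _ = ∑ i, G i * R i := by simp

end Transforms

section Restriction

variable {n k : ℕ}

theorem injective_restrict_index {σ τ : Fin k} (hστ : σ ≠ τ) :
    Function.Injective fun (j : Fin n → Fin 2) (t : Fin n) => if j t = 0 then σ else τ := by
  refine Function.Injective.comp_left (g := fun b : Fin 2 => if b = 0 then σ else τ) ?_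
  intro a b hab
  fin_cases a <;> fin_cases b <;> simp_all [eq_comm]

theorem sum_restrict_mul_restrict {σ τ : Fin k} (hστ : σ ≠ τ) (G R : (Fin n → Fin k) → ℂ)
    (hR : ∀ i : Fin n → Fin k, (∃ t, i t ≠ σ ∧ i t ≠ τ) → R i = 0) :
    ∑ j, restrict G σ τ j * restrict R σ τ j = ∑ i, G i * R i := by
  refine Fintype.sum_of_injective _ (injective_restrict_index hστ) _ _ (fun i hi => ?_)
    fun _ => rfl
  suffices ∃ t, i t ≠ σ ∧ i t ≠ τ by rw [hR i this, mul_zero]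
  by_contra! hall
  refine hi ⟨fun t => if i t = σ then 0 else 1, funext fun t => ?_⟩
  by_cases h : i t = σ
  · simp [h]
  · simp [hall t h, hστ.symm]

end Restriction

/-- If `R'` vanishes outside the first two domain values,
then the contraction of `Ǧ` with `Ř` equals the contraction of `G` with `R`. -/
theorem checked_contraction_eq {k n : ℕ} (hk : 3 ≤ k)
    (X' : Matrix (Fin k) (Fin k) ℂ) (hinv : IsUnit X'.det)
    (R G : (Fin n → Fin k) → ℂ)
    (R' G' : (Fin n → Fin k) → ℂ)
    (hR' : R' = rtrans X' R) (hG' : G' = gtrans X'⁻¹ G)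
    (hvan : ∀ i : Fin n → Fin k, (∃ j : Fin n, 2 ≤ (i j : ℕ)) → R' i = 0) :
    ∑ j : Fin n → Fin 2,
        restrict G' ⟨0, by omega⟩ ⟨1, by omega⟩ j *
          restrict R' ⟨0, by omega⟩ ⟨1, by omega⟩ j =
      ∑ i : Fin n → Fin k, G i * R i := by
  have hR'_vanish : ∀ i : Fin n → Fin k,
      (∃ t, i t ≠ ⟨0, by omega⟩ ∧ i t ≠ ⟨1, by omega⟩) → R' i = 0 := by
    rintro i ⟨t, h0, h1⟩
    exact hvan i ⟨t, by simp only [ne_eq, Fin.ext_iff] at h0 h1; omega⟩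
  rw [sum_restrict_mul_restrict (by simp [Fin.ext_iff]) G' R' hR'_vanish, hR', hG']
  exact sum_gtrans_mul_rtrans_of_mul_eq_one (X'.mul_nonsing_inv hinv) R G
end

section
/- Let k ≥ 3, ℓ ≥ 1. Let M = (α_1 ⋯ α_k) be a 2^ℓ × k complex matrix of rank 2, let R_1,…,R_r be tensors of arity n on domain size k with R_1 non-degenerate, and let G_1,…,G_g be column tensors of arity n on domain size k, and suppose there are tensors R̲_i, G̲_j of arity n on domain size 2^ℓ with R_i = R̲_i M^{⊗n} for all i and M^{⊗n} G_j = G̲_j for all j. Then there exist σ ≠ τ in Fin k with columns α_σ, α_τ linearly independent, a 2 × k matrix X_{σ,τ} of rank 2 with (α_σ α_τ)·X_{σ,τ} = M, and, setting M_{(2)} = (α_σ α_τ), it holds that: M_{(2)} has rank 2, Ř_i = R̲_i M_{(2)}^{⊗n} and M_{(2)}^{⊗n} Ǧ_j = G̲_j for all i, j (where Ř_i, Ǧ_j are the restrictions to {0,1} of R_i (X'_{σ,τ})^{⊗n} and (X'^{-1}_{σ,τ})^{⊗n} G_j for any invertible k × k matrix X'_{σ,τ} with X_{σ,τ}·X'_{σ,τ}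 = [[1,0,…,0],[0,1,0,…,0]]), and M = M_{(2)} X_{σ,τ}, so that R_i = R̲_i (M_{(2)} X_{σ,τ})^{⊗n} and (M_{(2)} X_{σ,τ})^{⊗n} G_j = G̲_j for all i, j. -/
open Matrix BigOperators

/-!
Since `M` has rank 2, two of its columns `α_σ, α_τ` span its column space, so
`M = (α_σ α_τ) X` for some `X`, and both factors have rank 2. Both transforms are
functorial in the matrix, and restricting a tensor to `{0, 1}` is itself the transform
under the selection matrix `projMat k` (or its transpose). As `projMat k · (projMat k)ᵀ = 1`,
the relation `X X' = projMat k` gives `M X' = (α_σ α_τ) · projMat k`, and the checked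
signatures are then realized on `(α_σ α_τ)` by composing transforms.
-/

open Submodule

section Transforms

variable {n : ℕ} {D E F : Type*}

theorem rtrans_rtrans [Fintype D] [Fintype E] (M : Matrix D E ℂ) (X : Matrix E F ℂ)
    (R : (Fin n → D) → ℂ) : rtrans X (rtrans M R) = rtrans (M * X) R := by
  funext i
  simp only [rtrans, Finset.sum_mul, Matrix.mul_apply]
  rw [Finset.sum_comm]
  refine Finset.sum_congr rfl fun j _ => ?_
  simp only [Finset.prod_univ_sum, Fintype.piFinset_univ, Finset.mul_sum]
  refine Finset.sum_congr rfl fun c _ => ?_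
  rw [Finset.prod_mul_distrib, mul_assoc]

theorem gtrans_gtrans [Fintype E] [Fintype F] (M : Matrix D E ℂ) (X : Matrix E F ℂ)
    (G : (Fin n → F) → ℂ) : gtrans M (gtrans X G) = gtrans (M * X) G := by
  funext s
  simp only [gtrans, Finset.mul_sum, Matrix.mul_apply]
  rw [Finset.sum_comm]
  refine Finset.sum_congr rfl fun c _ => ?_
  simp only [Finset.prod_univ_sum, Fintype.piFinset_univ, Finset.sum_mul]
  refine Finset.sum_congr rfl fun i _ => ?_
  rw [Finset.prod_mul_distrib, mul_assoc]

theorem rtrans_one_submatrix [Fintype E] [DecidableEq E] (e : F → E) (R : (Fin n → E) → ℂ) :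
    rtrans ((1 : Matrix E E ℂ).submatrix id e) R = fun i => R (e ∘ i) := by
  funext i
  rw [rtrans, Fintype.sum_eq_single (e ∘ i)]
  · simp [Matrix.one_apply]
  · intro j hj
    obtain ⟨t, ht⟩ : ∃ t, j t ≠ e (i t) := by
      by_contra! h
      exact hj (funext h)
    rw [Finset.prod_eq_zero (Finset.mem_univ t) (by simp [ht]), mul_zero]

theorem gtrans_one_submatrix [Fintype E] [DecidableEq E] (e : D → E) (G : (Fin n → E) → ℂ) :
    gtrans ((1 : Matrix E E ℂ).submatrix e id) G = fun s => G (e ∘ s) := by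
  funext s
  rw [gtrans, Fintype.sum_eq_single (e ∘ s)]
  · simp [Matrix.one_apply]
  · intro i hi
    obtain ⟨t, ht⟩ : ∃ t, e (s t) ≠ i t := by
      by_contra! h
      exact hi (funext h).symm
    rw [Finset.prod_eq_zero (Finset.mem_univ t) (by simp [ht]), zero_mul]

end Transforms

section Restriction

variable {n k : ℕ} {D : Type*}

theorem restrict_eq_rtrans (R : (Fin n → Fin k) → ℂ) (σ τ : Fin k) :
    restrict R σ τ = rtrans ((1 : Matrix (Fin k) (Fin k) ℂ).submatrix id ![σ, τ]) R := by
  rw [rtrans_one_submatrix]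
  funext j
  refine congrArg R (funext fun t => ?_)
  rw [Function.comp_apply]
  generalize j t = b
  fin_cases b <;> rfl

theorem restrict_eq_gtrans (G : (Fin n → Fin k) → ℂ) (σ τ : Fin k) :
    restrict G σ τ = gtrans ((1 : Matrix (Fin k) (Fin k) ℂ).submatrix ![σ, τ] id) G := by
  rw [gtrans_one_submatrix]
  funext j
  refine congrArg G (funext fun t => ?_)
  rw [Function.comp_apply]
  generalize j t = b
  fin_cases b <;> rfl

theorem transpose_subM (M : Matrix D (Fin k) ℂ) (σ τ : Fin k) :
    (subM M σ τ)ᵀ = ![Mᵀ σ, Mᵀ τ] := by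
  ext c i
  fin_cases c <;> rfl

theorem projMat_eq_one_submatrix (hk : 2 ≤ k) :
    projMat k = (1 : Matrix (Fin k) (Fin k) ℂ).submatrix ![⟨0, by omega⟩, ⟨1, by omega⟩] id := by
  ext r c
  fin_cases r <;> simp [projMat, Matrix.one_apply, Fin.ext_iff, eq_comm]

theorem Matrix.one_submatrix_mul_one_submatrix {m α : Type*} [Fintype D] [DecidableEq D]
    [DecidableEq m] [NonAssocSemiring α] {e : m → D} (he : Function.Injective e) :
    (1 : Matrix D D α).submatrix e id * (1 : Matrix D D α).submatrix id e = 1 := by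
  ext i j
  simp [Matrix.mul_apply, Matrix.one_apply, he.eq_iff]

theorem restrict_rtrans_mul_projMat [Fintype D] (hk : 2 ≤ k) (A : Matrix D (Fin 2) ℂ)
    (R : (Fin n → D) → ℂ) :
    restrict (rtrans (A * projMat k) R) ⟨0, by omega⟩ ⟨1, by omega⟩ = rtrans A R := by
  have hinj : Function.Injective ![(⟨0, by omega⟩ : Fin k), ⟨1, by omega⟩] := by
    intro a b
    fin_cases a <;> fin_cases b <;> simp
  rw [restrict_eq_rtrans, rtrans_rtrans, projMat_eq_one_submatrix hk, Matrix.mul_assoc,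
    Matrix.one_submatrix_mul_one_submatrix hinj, Matrix.mul_one]

theorem gtrans_restrict (hk : 2 ≤ k) (A : Matrix D (Fin 2) ℂ) (G : (Fin n → Fin k) → ℂ) :
    gtrans A (restrict G ⟨0, by omega⟩ ⟨1, by omega⟩) = gtrans (A * projMat k) G := by
  rw [restrict_eq_gtrans, gtrans_gtrans, projMat_eq_one_submatrix hk]

end Restriction

theorem exists_linearIndependent_pair_span_eq {K V ι : Type*} [DivisionRing K] [AddCommGroup V]
    [Module K V] [Finite ι] (v : ι → V) (h : Module.finrank K (span K (Set.range v)) = 2) :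
    ∃ σ τ, LinearIndependent K ![v σ, v τ] ∧
      span K (Set.range ![v σ, v τ]) = span K (Set.range v) := by
  obtain ⟨κ, a, ha, hspan, hli⟩ := exists_linearIndependent' K v
  have : Finite κ := Finite.of_injective a ha
  have : Fintype κ := Fintype.ofFinite κ
  have hcard : Fintype.card κ = 2 := by rw [← finrank_span_eq_card hli, hspan, h]
  let e := (Fintype.equivFinOfCardEq hcard).symm
  have hpair : ![v (a (e 0)), v (a (e 1))] = (v ∘ a) ∘ e := by
    ext c : 1
    fin_cases c <;> rfl
  refine ⟨a (e 0), a (e 1), ?_, ?_⟩ <;> rw [hpair]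
  · exact hli.comp e e.injective
  · rw [e.surjective.range_comp, hspan]

theorem Matrix.exists_mul_eq_of_span_cols_le {K m n p : Type*} [Field K] [Fintype n]
    (A : Matrix m n K) (B : Matrix m p K)
    (h : span K (Set.range Bᵀ) ≤ span K (Set.range Aᵀ)) : ∃ X : Matrix n p K, A * X = B := by
  have hcol c : ∃ x : n → K, ∑ j, x j • Aᵀ j = Bᵀ c :=
    (mem_span_range_iff_exists_fun K).mp (h (subset_span ⟨c, rfl⟩))
  choose x hx using hcol
  refine ⟨Matrix.of fun j c => x c j, ?_⟩
  ext i c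
  simpa [Matrix.mul_apply, Finset.sum_apply, mul_comm] using congrFun (hx c) i

theorem Matrix.rank_eq_card_of_rank_mul_eq_card {K m n p : Type*} [Field K] [Fintype m]
    [Fintype n] [Fintype p] (A : Matrix m n K) (B : Matrix n p K)
    (h : (A * B).rank = Fintype.card n) : A.rank = Fintype.card n ∧ B.rank = Fintype.card n :=
  ⟨le_antisymm A.rank_le_card_width (h ▸ A.rank_mul_le_left B),
    le_antisymm B.rank_le_card_height (h ▸ A.rank_mul_le_right B)⟩

/-- (Forward direction of Theorem 3.3, together with
Corollary 4.2.) If `R_1, …, R_r` (with `R_1` non-degenerate) and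
`G_1, …, G_g` are simultaneously realizable on a `2^ℓ × k` basis `M` of
rank 2, then there are `σ ≠ τ` with linearly independent columns, a rank-2
matrix `X_{σ,τ}` with `(α_σ α_τ) X_{σ,τ} = M`, such that the checked
signatures are simultaneously realizable on `M_{(2)} = (α_σ α_τ)` of rank 2,
and the original signatures are realizable on `M_{(2)} X_{σ,τ}`. -/
theorem collapse_forward {k ℓ n r g : ℕ} (hk : 3 ≤ k)
    (M : Matrix (Fin (2 ^ ℓ)) (Fin k) ℂ) (hM : M.rank = 2)
    (R : Fin r → (Fin n → Fin k) → ℂ) (G : Fin g → (Fin n → Fin k) → ℂ)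
    (R0 : Fin r → (Fin n → Fin (2 ^ ℓ)) → ℂ)
    (G0 : Fin g → (Fin n → Fin (2 ^ ℓ)) → ℂ)
    (hR : ∀ i, R i = rtrans M (R0 i)) (hG : ∀ j, gtrans M (G j) = G0 j) :
    ∃ σ τ : Fin k, σ ≠ τ ∧
      LinearIndependent ℂ ![(fun i => M i σ), (fun i => M i τ)] ∧
      ∃ X : Matrix (Fin 2) (Fin k) ℂ, X.rank = 2 ∧ subM M σ τ * X = M ∧
        (subM M σ τ).rank = 2 ∧
        (∀ X' : Matrix (Fin k) (Fin k) ℂ, IsUnit X'.det →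
          X * X' = projMat k →
          (∀ i, restrict (rtrans X' (R i)) ⟨0, by omega⟩ ⟨1, by omega⟩ =
              rtrans (subM M σ τ) (R0 i)) ∧
          (∀ j, gtrans (subM M σ τ)
              (restrict (gtrans X'⁻¹ (G j)) ⟨0, by omega⟩ ⟨1, by omega⟩) =
                G0 j)) ∧
        (∀ i, R i = rtrans (subM M σ τ * X) (R0 i)) ∧
        (∀ j, gtrans (subM M σ τ * X) (G j) = G0 j) := by
  obtain ⟨σ, τ, hli, hspan⟩ :=
    exists_linearIndependent_pair_span_eq Mᵀ (M.rank_eq_finrank_span_cols ▸ hM)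
  obtain ⟨X, hXM⟩ := (subM M σ τ).exists_mul_eq_of_span_cols_le M
    (by rw [transpose_subM, hspan])
  obtain ⟨hsub, hX⟩ := (subM M σ τ).rank_eq_card_of_rank_mul_eq_card X (by rw [hXM, hM]; rfl)
  have hστ : σ ≠ τ := fun h => hli.injective.ne zero_ne_one (by simp [h])
  refine ⟨σ, τ, hστ, hli, X, hX, hXM, hsub, fun X' hX' hXX' => ?_, by rwa [hXM], by rwa [hXM]⟩
  have hMX' : M * X' = subM M σ τ * projMat k := by rw [← hXX', ← Matrix.mul_assoc, hXM]
  refine ⟨fun i => ?_, fun j => ?_⟩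
  · rw [hR i, rtrans_rtrans, hMX', restrict_rtrans_mul_projMat (by omega)]
  · rw [gtrans_restrict (by omega), gtrans_gtrans, ← hMX', Matrix.mul_assoc,
      Matrix.mul_nonsing_inv X' hX', Matrix.mul_one, hG j]
end
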